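/- arXiv:math/0212272 — 2 statements merged into one kernel-verified Lean document; each statement's English description precedes it below -/
import Mathlib

section
/- Let V be a module over Y_p(gl_2) and let β = (β_1,...,β_p) ∈ k^p with β_i - β_j ∉ ℤ for i ≠ j. Let V_β = {η ∈ V : T_{22}(u)η = Π_i(u+β_i)η for all u}. Then for every η ∈ V_β and every i, the vector T_{21}(-β_i)η lies in V_{β+δ_i} and the vector T_{12}(-β_i)η lies in V_{β-δ_i}, where β ± δ_i = (β_1, ..., β_i ± 1, ..., β_p). -/
open Polynomial

/-- Generator index for the level-`p` Yangian: `(i, j, k)` with `k : Fin p` encoding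
the superscript `k+1`. -/
abbrev YGen (p : ℕ) := Fin 2 × Fin 2 × Fin p

/-- The free-algebra version of the generator `t_{ij}^{(r)}`, with the conventions
`t_{ij}^{(0)} = δ_{ij}` and `t_{ij}^{(r)} = 0` for `r > p`. -/
noncomputable def tF (K : Type) [Field K] (p : ℕ) (i j : Fin 2) (r : ℕ) :
    FreeAlgebra K (YGen p) :=
  if h0 : r = 0 then (if i = j then 1 else 0)
  else if h : r ≤ p then FreeAlgebra.ι K (i, j, (⟨r - 1, by omega⟩ : Fin p)) else 0

/-- The defining relations of the level-`p` Yangian: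
`[t_{ij}^{(r)}, t_{kl}^{(s)}] = Σ_{a=1}^{min(r,s)} (t_{kj}^{(a-1)} t_{il}^{(r+s-a)} -
t_{kj}^{(r+s-a)} t_{il}^{(a-1)})`. -/
inductive YRel (K : Type) [Field K] (p : ℕ) :
    FreeAlgebra K (YGen p) → FreeAlgebra K (YGen p) → Prop
  | rel (i j k l : Fin 2) (r s : ℕ) (hr : 1 ≤ r) (hr' : r ≤ p) (hs : 1 ≤ s) (hs' : s ≤ p) :
      YRel K p (tF K p i j r * tF K p k l s - tF K p k l s * tF K p i j r)
        (∑ a ∈ Finset.Icc 1 (min r s),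
          (tF K p k j (a - 1) * tF K p i l (r + s - a)
            - tF K p k j (r + s - a) * tF K p i l (a - 1)))

/-- The level-`p` Yangian `Y_p(gl_2)`. -/
abbrev Yp (K : Type) [Field K] (p : ℕ) := RingQuot (YRel K p)

/-- The generator `t_{ij}^{(r)}` of `Y_p(gl_2)` (matrix indices `0,1` stand for `1,2`). -/
noncomputable def tY (K : Type) [Field K] (p : ℕ) (i j : Fin 2) (r : ℕ) : Yp K p :=
  RingQuot.mkAlgHom K (YRel K p) (tF K p i j r)

/-- The generating polynomial `T_{ij}(u) = δ_{ij} u^p + Σ_{k=1}^p t_{ij}^{(k)} u^{p-k}`. -/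
noncomputable def TY (K : Type) [Field K] (p : ℕ) (i j : Fin 2) : Polynomial (Yp K p) :=
  (if i = j then X ^ p else 0) + ∑ k ∈ Finset.Icc 1 p, C (tY K p i j k) * X ^ (p - k)

/-- The quantum determinant `D(u) = T_{11}(u) T_{22}(u-1) - T_{21}(u) T_{12}(u-1)`. -/
noncomputable def DY (K : Type) [Field K] (p : ℕ) : Polynomial (Yp K p) :=
  TY K p 0 0 * (TY K p 1 1).comp (X - 1) - TY K p 1 0 * (TY K p 0 1).comp (X - 1)

/-- The coefficient `d_i` of the quantum determinant: `D(u) = u^{2p} + Σ_i d_i u^{2p-i}`. -/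
noncomputable def dY (K : Type) [Field K] (p : ℕ) (i : ℕ) : Yp K p :=
  (DY K p).coeff (2 * p - i)

/-- The commutative subalgebra `Γ` generated by `t_{22}^{(1)},…,t_{22}^{(p)}` and
`d_1,…,d_{2p}`. -/
noncomputable def Gam (K : Type) [Field K] (p : ℕ) : Subalgebra K (Yp K p) :=
  Algebra.adjoin K
    ({x | ∃ k ∈ Finset.Icc 1 p, x = tY K p 1 1 k} ∪
     {x | ∃ i ∈ Finset.Icc 1 (2 * p), x = dY K p i})

/-- The weight space of weight `ψ` of a `Y_p(gl_2)`-module `V`: the set of vectors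
`η` with `T_22(u) η = Π_i (u + ψ_i) η` (coefficientwise in `u`). -/
def wtSet (K : Type) [Field K] (p : ℕ) (V : Type) [AddCommGroup V] [Module (Yp K p) V]
    (ψ : Fin p → K) : Set V :=
  {η | ∀ m : ℕ, ((TY K p 1 1).coeff m) • η =
    (algebraMap K (Yp K p) ((∏ i, (Polynomial.X + Polynomial.C (ψ i)) : Polynomial K).coeff m)) • η}



section WSAux

open Polynomial Finset

variable {K : Type} [Field K] {p : ℕ}

lemma tYzero (i j : Fin 2) : tY K p i j 0 = if i = j then 1 else 0 := by
  unfold tY tF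
  rw [dif_pos rfl]
  split_ifs <;> simp

lemma tYgt (i j : Fin 2) {r : ℕ} (h : p < r) : tY K p i j r = 0 := by
  unfold tY tF
  rw [dif_neg (by omega), dif_neg (by omega)]
  simp

lemma comm_tY_zeroL (i j k l : Fin 2) (s : ℕ) :
    tY K p i j 0 * tY K p k l s - tY K p k l s * tY K p i j 0 = 0 := by
  rw [tYzero]; split_ifs <;> simp

lemma comm_tY_zeroR (i j k l : Fin 2) (s : ℕ) :
    tY K p i j s * tY K p k l 0 - tY K p k l 0 * tY K p i j s = 0 := by
  rw [tYzero]; split_ifs <;> simp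

lemma comm_tY_topL (i j k l : Fin 2) {r : ℕ} (h : p < r) (s : ℕ) :
    tY K p i j r * tY K p k l s - tY K p k l s * tY K p i j r = 0 := by
  rw [tYgt i j h, zero_mul, mul_zero, sub_zero]

lemma comm_tY_topR (i j k l : Fin 2) (s : ℕ) {r : ℕ} (h : p < r) :
    tY K p i j s * tY K p k l r - tY K p k l r * tY K p i j s = 0 := by
  rw [tYgt k l h, zero_mul, mul_zero, sub_zero]

lemma commA (i j k l : Fin 2) (r s : ℕ) :
    tY K p i j r * tY K p k l s - tY K p k l s * tY K p i j r =
      ∑ a ∈ Finset.Icc 1 (min r s),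
        (tY K p k j (a - 1) * tY K p i l (r + s - a)
          - tY K p k j (r + s - a) * tY K p i l (a - 1)) := by
  by_cases hr0 : r = 0
  · subst hr0
    rw [show min 0 s = 0 by omega, show Finset.Icc 1 0 = (∅ : Finset ℕ) from
      Finset.Icc_eq_empty (by omega), Finset.sum_empty]
    exact comm_tY_zeroL i j k l s
  by_cases hs0 : s = 0
  · subst hs0
    rw [show min r 0 = 0 by omega, show Finset.Icc 1 0 = (∅ : Finset ℕ) from
      Finset.Icc_eq_empty (by omega), Finset.sum_empty]
    exact comm_tY_zeroR i j k l r
  by_cases hrp : p < r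
  · rw [comm_tY_topL i j k l hrp s]
    refine (Finset.sum_eq_zero fun a ha => ?_).symm
    rw [Finset.mem_Icc] at ha
    rw [tYgt i l (show p < r + s - a by omega), tYgt k j (show p < r + s - a by omega),
      mul_zero, zero_mul, sub_zero]
  by_cases hsp : p < s
  · rw [comm_tY_topR i j k l r hsp]
    refine (Finset.sum_eq_zero fun a ha => ?_).symm
    rw [Finset.mem_Icc] at ha
    rw [tYgt i l (show p < r + s - a by omega), tYgt k j (show p < r + s - a by omega),
      mul_zero, zero_mul, sub_zero]
  · have h := RingQuot.mkAlgHom_rel K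
      (YRel.rel (K := K) (p := p) i j k l r s (by omega) (by omega) (by omega) (by omega))
    simp only [map_sub, map_mul, map_sum] at h
    unfold tY
    exact h

lemma commB (i j k l : Fin 2) (r s : ℕ) :
    (tY K p i j (r+1) * tY K p k l s - tY K p k l s * tY K p i j (r+1))
      - (tY K p i j r * tY K p k l (s+1) - tY K p k l (s+1) * tY K p i j r)
    = tY K p k j r * tY K p i l s - tY K p k j s * tY K p i l r := by
  rw [commA, commA]
  have e : r + (s + 1) = r + 1 + s := by omega
  rw [e]
  rcases lt_trichotomy r s with h | h | h
  · rw [show min (r+1) s = r + 1 by omega, show min r (s+1) = r by omega,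
      Finset.sum_Icc_succ_top (by omega), add_sub_cancel_left,
      show r + 1 - 1 = r by omega, show r + 1 + s - (r + 1) = s by omega]
  · subst h
    rw [show min (r+1) r = r by omega, show min r (r+1) = r by omega, sub_self, sub_self]
  · rw [show min (r+1) s = s by omega, show min r (s+1) = s + 1 by omega,
      Finset.sum_Icc_succ_top (by omega), sub_add_eq_sub_sub, sub_self, zero_sub,
      show s + 1 - 1 = s by omega, show r + 1 + s - (s + 1) = r by omega, neg_sub]

/- specialized ring-level polynomial lemmas (instance-path hygiene for `RingQuot`) -/

lemma psub_mul (a b c : Polynomial (Yp K p)) : (a - b) * c = a * c - b * c := sub_mul a b c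

lemma psub_self (a : Polynomial (Yp K p)) : a - a = 0 := sub_self a

lemma pC_sub (a b : Yp K p) : (C (a - b) : Polynomial (Yp K p)) = C a - C b := map_sub C a b

lemma pC_neg (a : Yp K p) : (C (-a) : Polynomial (Yp K p)) = -C a := map_neg C a

lemma pcoeff_sub (f g : Polynomial (Yp K p)) (n : ℕ) :
    (f - g).coeff n = f.coeff n - g.coeff n := by exact Polynomial.coeff_sub f g n

lemma pcoeff_neg (f : Polynomial (Yp K p)) (n : ℕ) : (-f).coeff n = -(f.coeff n) := by
  exact Polynomial.coeff_neg f n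

set_option maxHeartbeats 1000000 in
lemma psum_sub {ι : Type} (s : Finset ι) (f g : ι → Polynomial (Yp K p)) :
    ∑ x ∈ s, (f x - g x) = ∑ x ∈ s, f x - ∑ x ∈ s, g x := by
  exact Finset.sum_sub_distrib (s := s) (f := f) (g := g)

/- generic noncommutative ring identities -/

section GenericIds


lemma gsub_rev {A : Type*} [Ring A] (a b : A) : a - b = -(b - a) := by noncomm_ring

lemma gsub_neg {A : Type*} [Ring A] (a b : A) : a - -b = a + b := by noncomm_ring

lemma gadd_sub1 {A : Type*} [Ring A] (x a : A) : x + (a - 1) = x + a - 1 := by noncomm_ring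

lemma gdistrib {A : Type*} [Ring A] (u w s r : A) :
    u * (w - s * r) = u * w - (u * s) * r := by noncomm_ring

lemma gassoc0 {A : Type*} [Ring A] (a s r : A) : a * (s * r) - (a * s) * r = 0 := by
  noncomm_ring

lemma gma {A : Type*} [Ring A] (a u s r : A) :
    a * ((u * s) * r) - a * (u * (s * r)) = 0 := by noncomm_ring

lemma gsplit {A : Type*} [Ring A] (a b c : A) : a - c = (a - b) + (b - c) := by noncomm_ring

lemma gid1 {A : Type*} [Ring A] (u v Q Pv Cq P : A)
    (h : (v - u) * (Cq * P - P * Cq) = Cq * P - Q * Pv) :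
    Q * Pv - (u - v + 1) * (Cq * P) = (v - u) * (P * Cq) := by
  have h' : Q * Pv = Cq * P - (v - u) * (Cq * P - P * Cq) := by rw [h]; noncomm_ring
  rw [h']; noncomm_ring

lemma gid2 {A : Type*} [Ring A] (u v Q Pv Cq P bA : A) :
    (u - v) * ((u - v) * (Cq * P) - bA * Pv)
      = (u - v) * ((u - v + 1) * (Cq * P) - Q * Pv)
        + ((u - v) * (Q * Pv - Pv * Q) - (Q * Pv - Cq * P))
        + (Q * Pv - (u - v + 1) * (Cq * P))
        + (u - v) * (Pv * (Q - bA))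
        + ((u - v) * (Pv * bA) - (u - v) * (bA * Pv)) := by noncomm_ring

lemma gG {A : Type*} [Ring A] (u v Q Rv R Cq bA S : A) :
    (u - v) * (Q * Rv - (u - v - 1) * S)
      = ((u - v) * (Q * Rv - Rv * Q) - (R * Cq - Rv * Q))
        + R * Cq
        + (u - v - 1) * (Rv * (Q - bA))
        + ((u - v - 1) * (Rv * bA) - (u - v - 1) * (bA * Rv))
        + ((u - v - 1) * (bA * Rv) - (u - v - 1) * ((u - v) * S)) := by noncomm_ring

lemma gfin {A : Type*} [Ring A] (QP L W S BA : A) :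
    QP - BA = (QP - L * W) + L * (W - S) + (L * S - BA) := by noncomm_ring

end GenericIds

set_option maxHeartbeats 2000000 in
lemma pgsub_rev (a b : Polynomial (Yp K p)) : a - b = -(b - a) := by exact gsub_rev a b

set_option maxHeartbeats 2000000 in
lemma pgma (a u s r : Polynomial (Yp K p)) :
    a * ((u * s) * r) - a * (u * (s * r)) = 0 := by exact gma a u s r

set_option maxHeartbeats 2000000 in
lemma pgassoc0 (a s r : Polynomial (Yp K p)) :
    a * (s * r) - (a * s) * r = 0 := by exact gassoc0 a s r

/- expansion of the generating polynomials -/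

lemma TYsum (i j : Fin 2) :
    TY K p i j = ∑ r ∈ Finset.range (p+1), C (tY K p i j r) * X ^ (p - r) := by
  have hins : Finset.range (p+1) = insert 0 (Finset.Icc 1 p) := by
    ext x; simp only [Finset.mem_range, Finset.mem_insert, Finset.mem_Icc]; omega
  rw [hins, Finset.sum_insert (by simp), TY, tYzero]
  congr 1
  split_ifs <;> simp

lemma evalTY (i j : Fin 2) (c : Yp K p) :
    (TY K p i j).eval c = ∑ r ∈ Finset.range (p+1), tY K p i j r * c ^ (p - r) := by
  rw [TYsum, Polynomial.eval_finset_sum]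
  refine Finset.sum_congr rfl fun r _ => ?_
  rw [Polynomial.C_mul_X_pow_eq_monomial, Polynomial.eval_monomial]

lemma aux2 (a b a' b' z : Yp K p) :
    (a * b - a' * b') * z = a * (b * z) - a' * (b' * z) := by
  rw [sub_mul, mul_assoc, mul_assoc]

lemma aux3 {c : Yp K p} (hc : ∀ x : Yp K p, c * x = x * c) (x : Yp K p) (m : ℕ) :
    c * (x * c ^ m) = x * c ^ (m + 1) := by
  rw [← mul_assoc, hc x, mul_assoc, ← pow_succ']

lemma shiftSum {M : Type*} [AddCommMonoid M] (p : ℕ) (F : ℕ → M) (h0 : F 0 = 0)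
    (htop : F (p+1) = 0) :
    ∑ r ∈ Finset.range (p+1), F r = ∑ r ∈ Finset.range (p+1), F (r+1) := by
  rw [Finset.sum_range_succ' F p, Finset.sum_range_succ (fun r => F (r+1)) p, h0, htop,
    add_zero]

lemma expandR (i j k l : Fin 2) (c : Yp K p) (hc : ∀ x : Yp K p, c * x = x * c) :
    TY K p i j * C ((TY K p k l).eval c) =
      ∑ r ∈ Finset.range (p+1), ∑ s ∈ Finset.range (p+1),
        C (tY K p i j r * (tY K p k l s * c ^ (p - s))) * X ^ (p - r) := by
  rw [evalTY k l c, TYsum i j, Finset.sum_mul]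
  refine Finset.sum_congr rfl fun r _ => ?_
  rw [map_sum, Finset.mul_sum]
  refine Finset.sum_congr rfl fun s _ => ?_
  conv_lhs => rw [mul_assoc, Polynomial.X_pow_mul, ← mul_assoc, ← Polynomial.C_mul]

lemma expandL (i j k l : Fin 2) (c : Yp K p) (hc : ∀ x : Yp K p, c * x = x * c) :
    C ((TY K p k l).eval c) * TY K p i j =
      ∑ r ∈ Finset.range (p+1), ∑ s ∈ Finset.range (p+1),
        C (tY K p k l s * (tY K p i j r * c ^ (p - s))) * X ^ (p - r) := by
  have hcp : ∀ (n : ℕ) (x : Yp K p), c ^ n * x = x * c ^ n := by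
    intro n x
    induction n with
    | zero => simp
    | succ n ih => rw [pow_succ, mul_assoc, hc x, ← mul_assoc, ih, mul_assoc, ← pow_succ]
  rw [evalTY k l c, TYsum i j, map_sum, Finset.sum_mul]
  simp only [Finset.mul_sum]
  rw [Finset.sum_comm]
  refine Finset.sum_congr rfl fun r _ => ?_
  refine Finset.sum_congr rfl fun s _ => ?_
  conv_lhs => rw [← mul_assoc, ← Polynomial.C_mul, mul_assoc, hcp (p - s) (tY K p i j r)]

lemma relI1 (i j k l : Fin 2) (sc : K) :
    (X - C (algebraMap K (Yp K p) sc)) *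
        (TY K p i j * C ((TY K p k l).eval (algebraMap K (Yp K p) sc))
          - C ((TY K p k l).eval (algebraMap K (Yp K p) sc)) * TY K p i j)
      = TY K p k j * C ((TY K p i l).eval (algebraMap K (Yp K p) sc))
          - C ((TY K p k j).eval (algebraMap K (Yp K p) sc)) * TY K p i l := by
  set c : Yp K p := algebraMap K (Yp K p) sc with hcdef
  have hc : ∀ x : Yp K p, c * x = x * c := fun x => Algebra.commutes sc x
  have hS : TY K p i j * C ((TY K p k l).eval c) - C ((TY K p k l).eval c) * TY K p i j
      = ∑ r ∈ Finset.range (p+1), ∑ s ∈ Finset.range (p+1),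
          C ((tY K p i j r * tY K p k l s - tY K p k l s * tY K p i j r) * c ^ (p - s))
            * X ^ (p - r) := by
    rw [expandR i j k l c hc, expandL i j k l c hc, ← psum_sub]
    refine Finset.sum_congr rfl fun r _ => ?_
    rw [← psum_sub]
    refine Finset.sum_congr rfl fun s _ => ?_
    conv_rhs => rw [aux2, pC_sub, psub_mul]
  have hT : (X - C c) * (∑ r ∈ Finset.range (p+1), ∑ s ∈ Finset.range (p+1),
        C ((tY K p i j r * tY K p k l s - tY K p k l s * tY K p i j r) * c ^ (p - s))
          * X ^ (p - r))
      = (∑ r ∈ Finset.range (p+1), ∑ s ∈ Finset.range (p+1),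
          C ((tY K p i j r * tY K p k l s - tY K p k l s * tY K p i j r) * c ^ (p - s))
            * X ^ (p + 1 - r))
        - (∑ r ∈ Finset.range (p+1), ∑ s ∈ Finset.range (p+1),
          C ((tY K p i j r * tY K p k l s - tY K p k l s * tY K p i j r) * c ^ (p + 1 - s))
            * X ^ (p - r)) := by
    rw [psub_mul]
    congr 1
    · rw [Finset.mul_sum]
      refine Finset.sum_congr rfl fun r hr => ?_
      rw [Finset.mul_sum]
      refine Finset.sum_congr rfl fun s hs => ?_
      conv_lhs => rw [Polynomial.X_mul, mul_assoc, ← pow_succ]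
      rw [show p - r + 1 = p + 1 - r by have := Finset.mem_range.mp hr; omega]
    · rw [Finset.mul_sum]
      refine Finset.sum_congr rfl fun r hr => ?_
      rw [Finset.mul_sum]
      refine Finset.sum_congr rfl fun s hs => ?_
      conv_lhs => rw [← mul_assoc, ← Polynomial.C_mul, aux3 hc]
      rw [show p - s + 1 = p + 1 - s by have := Finset.mem_range.mp hs; omega]
  have hA : (∑ r ∈ Finset.range (p+1), ∑ s ∈ Finset.range (p+1),
        C ((tY K p i j r * tY K p k l s - tY K p k l s * tY K p i j r) * c ^ (p - s))
          * X ^ (p + 1 - r))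
      = ∑ r ∈ Finset.range (p+1), ∑ s ∈ Finset.range (p+1),
        C ((tY K p i j (r+1) * tY K p k l s - tY K p k l s * tY K p i j (r+1)) * c ^ (p - s))
          * X ^ (p - r) := by
    rw [Finset.sum_comm]
    conv_rhs => rw [Finset.sum_comm]
    refine Finset.sum_congr rfl fun s _ => ?_
    refine (shiftSum p _ ?_ ?_).trans (Finset.sum_congr rfl fun r _ => ?_)
    · rw [comm_tY_zeroL, zero_mul, map_zero, zero_mul]
    · rw [comm_tY_topL i j k l (by omega) s, zero_mul, map_zero, zero_mul]
    · rw [show p + 1 - (r + 1) = p - r by omega]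
  have hB : (∑ r ∈ Finset.range (p+1), ∑ s ∈ Finset.range (p+1),
        C ((tY K p i j r * tY K p k l s - tY K p k l s * tY K p i j r) * c ^ (p + 1 - s))
          * X ^ (p - r))
      = ∑ r ∈ Finset.range (p+1), ∑ s ∈ Finset.range (p+1),
        C ((tY K p i j r * tY K p k l (s+1) - tY K p k l (s+1) * tY K p i j r) * c ^ (p - s))
          * X ^ (p - r) := by
    refine Finset.sum_congr rfl fun r _ => ?_
    refine (shiftSum p _ ?_ ?_).trans (Finset.sum_congr rfl fun s _ => ?_)
    · rw [comm_tY_zeroR, zero_mul, map_zero, zero_mul]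
    · rw [comm_tY_topR i j k l r (by omega), zero_mul, map_zero, zero_mul]
    · rw [show p + 1 - (s + 1) = p - s by omega]
  have hRHS : TY K p k j * C ((TY K p i l).eval c) - C ((TY K p k j).eval c) * TY K p i l
      = ∑ r ∈ Finset.range (p+1), ∑ s ∈ Finset.range (p+1),
          C ((tY K p k j r * tY K p i l s - tY K p k j s * tY K p i l r) * c ^ (p - s))
            * X ^ (p - r) := by
    rw [expandR k j i l c hc, expandL i l k j c hc, ← psum_sub]
    refine Finset.sum_congr rfl fun r _ => ?_
    rw [← psum_sub]
    refine Finset.sum_congr rfl fun s _ => ?_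
    conv_rhs => rw [aux2, pC_sub, psub_mul]
  rw [hS, hT, hA, hB, hRHS, ← psum_sub]
  refine Finset.sum_congr rfl fun r _ => ?_
  rw [← psum_sub]
  refine Finset.sum_congr rfl fun s _ => ?_
  conv_lhs => rw [← psub_mul, ← pC_sub, ← sub_mul]
  rw [commB]

lemma relI2 (i j k l : Fin 2) (sc : K) :
    (C (algebraMap K (Yp K p) sc) - X) *
        (C ((TY K p i j).eval (algebraMap K (Yp K p) sc)) * TY K p k l
          - TY K p k l * C ((TY K p i j).eval (algebraMap K (Yp K p) sc)))
      = C ((TY K p k j).eval (algebraMap K (Yp K p) sc)) * TY K p i l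
          - TY K p k j * C ((TY K p i l).eval (algebraMap K (Yp K p) sc)) := by
  set c : Yp K p := algebraMap K (Yp K p) sc with hcdef
  have hc : ∀ x : Yp K p, c * x = x * c := fun x => Algebra.commutes sc x
  have hS : C ((TY K p i j).eval c) * TY K p k l - TY K p k l * C ((TY K p i j).eval c)
      = ∑ r ∈ Finset.range (p+1), ∑ s ∈ Finset.range (p+1),
          C ((tY K p i j s * tY K p k l r - tY K p k l r * tY K p i j s) * c ^ (p - s))
            * X ^ (p - r) := by
    rw [expandL k l i j c hc, expandR k l i j c hc, ← psum_sub]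
    refine Finset.sum_congr rfl fun r _ => ?_
    rw [← psum_sub]
    refine Finset.sum_congr rfl fun s _ => ?_
    conv_rhs => rw [aux2, pC_sub, psub_mul]
  have hT : (C c - X) * (∑ r ∈ Finset.range (p+1), ∑ s ∈ Finset.range (p+1),
        C ((tY K p i j s * tY K p k l r - tY K p k l r * tY K p i j s) * c ^ (p - s))
          * X ^ (p - r))
      = (∑ r ∈ Finset.range (p+1), ∑ s ∈ Finset.range (p+1),
          C ((tY K p i j s * tY K p k l r - tY K p k l r * tY K p i j s) * c ^ (p + 1 - s))
            * X ^ (p - r))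
        - (∑ r ∈ Finset.range (p+1), ∑ s ∈ Finset.range (p+1),
          C ((tY K p i j s * tY K p k l r - tY K p k l r * tY K p i j s) * c ^ (p - s))
            * X ^ (p + 1 - r)) := by
    rw [psub_mul]
    congr 1
    · rw [Finset.mul_sum]
      refine Finset.sum_congr rfl fun r hr => ?_
      rw [Finset.mul_sum]
      refine Finset.sum_congr rfl fun s hs => ?_
      conv_lhs => rw [← mul_assoc, ← Polynomial.C_mul, aux3 hc]
      rw [show p - s + 1 = p + 1 - s by have := Finset.mem_range.mp hs; omega]
    · rw [Finset.mul_sum]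
      refine Finset.sum_congr rfl fun r hr => ?_
      rw [Finset.mul_sum]
      refine Finset.sum_congr rfl fun s hs => ?_
      conv_lhs => rw [Polynomial.X_mul, mul_assoc, ← pow_succ]
      rw [show p - r + 1 = p + 1 - r by have := Finset.mem_range.mp hr; omega]
  have hA : (∑ r ∈ Finset.range (p+1), ∑ s ∈ Finset.range (p+1),
        C ((tY K p i j s * tY K p k l r - tY K p k l r * tY K p i j s) * c ^ (p + 1 - s))
          * X ^ (p - r))
      = ∑ r ∈ Finset.range (p+1), ∑ s ∈ Finset.range (p+1),
        C ((tY K p i j (s+1) * tY K p k l r - tY K p k l r * tY K p i j (s+1)) * c ^ (p - s))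
          * X ^ (p - r) := by
    refine Finset.sum_congr rfl fun r _ => ?_
    refine (shiftSum p _ ?_ ?_).trans (Finset.sum_congr rfl fun s _ => ?_)
    · rw [comm_tY_zeroL, zero_mul, map_zero, zero_mul]
    · rw [comm_tY_topL i j k l (by omega) r, zero_mul, map_zero, zero_mul]
    · rw [show p + 1 - (s + 1) = p - s by omega]
  have hB : (∑ r ∈ Finset.range (p+1), ∑ s ∈ Finset.range (p+1),
        C ((tY K p i j s * tY K p k l r - tY K p k l r * tY K p i j s) * c ^ (p - s))
          * X ^ (p + 1 - r))
      = ∑ r ∈ Finset.range (p+1), ∑ s ∈ Finset.range (p+1),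
        C ((tY K p i j s * tY K p k l (r+1) - tY K p k l (r+1) * tY K p i j s) * c ^ (p - s))
          * X ^ (p - r) := by
    rw [Finset.sum_comm]
    conv_rhs => rw [Finset.sum_comm]
    refine Finset.sum_congr rfl fun s _ => ?_
    refine (shiftSum p _ ?_ ?_).trans (Finset.sum_congr rfl fun r _ => ?_)
    · rw [comm_tY_zeroR, zero_mul, map_zero, zero_mul]
    · rw [comm_tY_topR i j k l s (by omega), zero_mul, map_zero, zero_mul]
    · rw [show p + 1 - (r + 1) = p - r by omega]
  have hRHS : C ((TY K p k j).eval c) * TY K p i l - TY K p k j * C ((TY K p i l).eval c)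
      = ∑ r ∈ Finset.range (p+1), ∑ s ∈ Finset.range (p+1),
          C ((tY K p k j s * tY K p i l r - tY K p k j r * tY K p i l s) * c ^ (p - s))
            * X ^ (p - r) := by
    rw [expandL i l k j c hc, expandR k j i l c hc, ← psum_sub]
    refine Finset.sum_congr rfl fun r _ => ?_
    rw [← psum_sub]
    refine Finset.sum_congr rfl fun s _ => ?_
    conv_rhs => rw [aux2, pC_sub, psub_mul]
  rw [hS, hT, hA, hB, hRHS, ← psum_sub]
  refine Finset.sum_congr rfl fun r _ => ?_
  rw [← psum_sub]
  refine Finset.sum_congr rfl fun s _ => ?_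
  conv_lhs => rw [← psub_mul, ← pC_sub, ← sub_mul]
  rw [commB]

lemma centralCcomm {z : Yp K p} (hz : ∀ x, z * x = x * z) (f : Polynomial (Yp K p)) :
    C z * f = f * C z := by
  ext n
  rw [Polynomial.coeff_C_mul, Polynomial.coeff_mul_C, hz]

lemma mapPolyComm (g : Polynomial K) (f : Polynomial (Yp K p)) :
    g.map (algebraMap K (Yp K p)) * f = f * g.map (algebraMap K (Yp K p)) := by
  induction g using Polynomial.induction_on' with
  | add a b ha hb => rw [Polynomial.map_add, add_mul, mul_add, ha, hb]
  | monomial n a =>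
      rw [Polynomial.map_monomial, ← Polynomial.C_mul_X_pow_eq_monomial]
      conv_lhs => rw [mul_assoc, Polynomial.X_pow_mul, ← mul_assoc]
      rw [centralCcomm (fun x => Algebra.commutes a x) f, mul_assoc]

section Zmod

variable {V : Type} [AddCommGroup V] [Module (Yp K p) V] (η : V)

def Znull (f : Polynomial (Yp K p)) : Prop := ∀ m, f.coeff m • η = 0

lemma Znull_zero : Znull η (0 : Polynomial (Yp K p)) := fun m => by simp

lemma Znull_add {f g : Polynomial (Yp K p)} (hf : Znull η f) (hg : Znull η g) :
    Znull η (f + g) := fun m => by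
  rw [Polynomial.coeff_add, add_smul, hf m, hg m, add_zero]

lemma Znull_neg {f : Polynomial (Yp K p)} (hf : Znull η f) : Znull η (-f) := fun m => by
  rw [pcoeff_neg, neg_smul, hf m, neg_zero]

lemma Znull_mul (f : Polynomial (Yp K p)) {g : Polynomial (Yp K p)} (hg : Znull η g) :
    Znull η (f * g) := fun m => by
  rw [Polynomial.coeff_mul, Finset.sum_smul]
  refine Finset.sum_eq_zero fun x _ => ?_
  rw [mul_smul, hg x.2, smul_zero]

lemma Znull_cancel (z : Yp K p) {f : Polynomial (Yp K p)}
    (h : Znull η ((X + C z) * f)) : Znull η f := by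
  have key : ∀ m, f.coeff m • η + z • (f.coeff (m+1) • η) = 0 := by
    intro m
    have h1 := h (m+1)
    rw [add_mul, Polynomial.coeff_add, Polynomial.coeff_X_mul, Polynomial.coeff_C_mul,
      add_smul, mul_smul] at h1
    exact h1
  have step : ∀ (k m : ℕ), f.coeff m • η = ((-z)^k) • (f.coeff (m+k) • η) := by
    intro k
    induction k with
    | zero => intro m; simp
    | succ n ih =>
        intro m
        have e1 : f.coeff (m+n) • η = (-z) • (f.coeff (m+n+1) • η) := by
          rw [neg_smul]
          exact eq_neg_of_add_eq_zero_left (key (m+n))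
        rw [ih m, e1, smul_smul, ← pow_succ, show m + n + 1 = m + (n + 1) by omega]
  intro m
  rw [step (f.natDegree + 1) m,
    Polynomial.coeff_eq_zero_of_natDegree_lt (by omega), zero_smul, smul_zero]

end Zmod

end WSAux

/-- If `V` is a `Y_p(gl_2)`-module and `β` is generic (`β_i - β_j ∉ ℤ` for `i ≠ j`), then
for `η` in the weight space `V_β`, the vector `T_21(-β_i) η` lies in `V_(β+δ_i)` and
`T_12(-β_i) η` lies in `V_(β-δ_i)`. -/
theorem weight_shift (K : Type) [Field K] (p : ℕ) (V : Type) [AddCommGroup V]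
    [Module (Yp K p) V] (β : Fin p → K)
    (hβ : ∀ i j, i ≠ j → ∀ m : ℤ, β i - β j ≠ (m : K))
    (η : V) (hη : η ∈ wtSet K p V β) (i : Fin p) :
    ((TY K p 1 0).eval (algebraMap K (Yp K p) (-β i))) • η ∈
        wtSet K p V (Function.update β i (β i + 1)) ∧
      ((TY K p 0 1).eval (algebraMap K (Yp K p) (-β i))) • η ∈
        wtSet K p V (Function.update β i (β i - 1)) := by
  classical
  simp only [wtSet, Set.mem_setOf_eq] at hη ⊢
  have id1 := relI1 (K := K) (p := p) 1 1 1 0 (-β i)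
  have id2 := relI2 (K := K) (p := p) 1 1 1 0 (-β i)
  have id3 := relI1 (K := K) (p := p) 1 1 0 1 (-β i)
  set aK := algebraMap K (Yp K p) with haK
  set c : Yp K p := aK (-β i) with hcdef
  set Q : Polynomial (Yp K p) := TY K p 1 1 with hQdef
  set Pp : Polynomial (Yp K p) := TY K p 1 0 with hPdef
  set R : Polynomial (Yp K p) := TY K p 0 1 with hRdef
  set q : Yp K p := Q.eval c with hqdef
  set pv : Yp K p := Pp.eval c with hpvdef
  set rv : Yp K p := R.eval c with hrvdef
  set b : Polynomial K := ∏ j, (X + C (β j)) with hbdef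
  set Bp : Polynomial K := ∏ j, (X + C (Function.update β i (β i + 1) j)) with hBpdef
  set Bm : Polynomial K := ∏ j, (X + C (Function.update β i (β i - 1) j)) with hBmdef
  set b2 : Polynomial K := ∏ j ∈ Finset.univ.erase i, (X + C (β j)) with hb2def
  set bA : Polynomial (Yp K p) := b.map aK with hbAdef
  set b2A : Polynomial (Yp K p) := b2.map aK with hb2Adef
  -- basic facts
  have hXz : (X : Polynomial (Yp K p)) - C c = X + C (aK (β i)) := by
    rw [hcdef, map_neg, pC_neg]
    exact gsub_neg X (C (aK (β i)))
  have hbsplit : b = (X + C (β i)) * b2 := by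
    rw [hbdef, hb2def]
    exact (Finset.mul_prod_erase _ _ (Finset.mem_univ i)).symm
  have hbAL : bA = (X - C c) * b2A := by
    rw [hbAdef, hbsplit, Polynomial.map_mul, Polynomial.map_add, Polynomial.map_X,
      Polynomial.map_C, ← hb2Adef, ← hXz]
  have hbplus : Bp = (X + C (β i + 1)) * b2 := by
    rw [hBpdef, hb2def, ← Finset.mul_prod_erase Finset.univ
      (fun j => X + C (Function.update β i (β i + 1) j)) (Finset.mem_univ i)]
    congr 1
    · rw [Function.update_self]
    · refine Finset.prod_congr rfl fun j hj => ?_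
      rw [Function.update_of_ne (Finset.ne_of_mem_erase hj)]
  have hbminus : Bm = (X + C (β i - 1)) * b2 := by
    rw [hBmdef, hb2def, ← Finset.mul_prod_erase Finset.univ
      (fun j => X + C (Function.update β i (β i - 1) j)) (Finset.mem_univ i)]
    congr 1
    · rw [Function.update_self]
    · refine Finset.prod_congr rfl fun j hj => ?_
      rw [Function.update_of_ne (Finset.ne_of_mem_erase hj)]
  have hbplusA : Bp.map aK = (X - C c + 1) * b2A := by
    rw [hbplus, Polynomial.map_mul, Polynomial.map_add, Polynomial.map_X,
      Polynomial.map_C, ← hb2Adef, show aK (β i + 1) = aK (β i) + 1 by rw [map_add, map_one],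
      map_add, Polynomial.C_1, ← add_assoc, ← hXz]
  have hbminusA : Bm.map aK = (X - C c - 1) * b2A := by
    rw [hbminus, Polynomial.map_mul, Polynomial.map_add, Polynomial.map_X,
      Polynomial.map_C, ← hb2Adef, show aK (β i - 1) = aK (β i) - 1 by rw [map_sub, map_one],
      pC_sub, Polynomial.C_1, gadd_sub1 X (C (aK (β i))), ← hXz]
  -- η is a weight vector:  Z (Q - bA)
  have hZb : Znull η (Q - bA) := by
    intro m
    rw [pcoeff_sub, sub_smul, hbAdef, Polynomial.coeff_map, hη m, sub_self]
  -- T₂₂(-βᵢ) kills η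
  have hbeval : b.eval (-β i) = 0 := by
    rw [hbdef, Polynomial.eval_prod]
    refine Finset.prod_eq_zero (Finset.mem_univ i) ?_
    simp
  have hq0 : q • η = 0 := by
    have hN1 : Q.natDegree < Q.natDegree + b.natDegree + 1 := by omega
    have hN2 : b.natDegree < Q.natDegree + b.natDegree + 1 := by omega
    have e1 : q = ∑ m ∈ Finset.range (Q.natDegree + b.natDegree + 1), Q.coeff m * c ^ m := by
      rw [hqdef]
      exact Polynomial.eval_eq_sum_range' hN1 c
    rw [e1, Finset.sum_smul]
    have e2 : ∀ m ∈ Finset.range (Q.natDegree + b.natDegree + 1),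
        (Q.coeff m * c ^ m) • η = aK (b.coeff m * (-β i) ^ m) • η := by
      intro m _
      have hcm : c ^ m = aK ((-β i) ^ m) := by rw [hcdef, map_pow]
      have e3 : Q.coeff m * c ^ m = c ^ m * Q.coeff m := by
        rw [hcm]
        exact (Algebra.commutes ((-β i) ^ m) (Q.coeff m)).symm
      rw [e3, mul_smul, hη m, ← mul_smul, hcm, ← map_mul,
        mul_comm ((-β i) ^ m) (b.coeff m)]
    rw [Finset.sum_congr rfl e2, ← Finset.sum_smul, ← map_sum,
      ← Polynomial.eval_eq_sum_range' hN2 (-β i), hbeval, map_zero, zero_smul]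
  have hZCq : Znull η (C q) := by
    intro m
    match m with
    | 0 => rw [Polynomial.coeff_C_zero]; exact hq0
    | Nat.succ m => rw [Polynomial.coeff_C]; simp
  constructor
  · -- T₂₁ raises βᵢ
    have e1 : Q * C pv - (X - C c + 1) * (C q * Pp) = (C c - X) * (Pp * C q) :=
      gid1 X (C c) Q (C pv) (C q) Pp id2
    have hZ1 : Znull η (Q * C pv - (X - C c + 1) * (C q * Pp)) := by
      rw [e1]
      exact Znull_mul _ _ (Znull_mul _ _ hZCq)
    have ea : (X - C c + 1) * (C q * Pp) - Q * C pv
        = -(Q * C pv - (X - C c + 1) * (C q * Pp)) :=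
      pgsub_rev _ _
    have com1 : C pv * bA = bA * C pv := (mapPolyComm b (C pv)).symm
    have eF : (X - C c) * ((X - C c) * (C q * Pp) - bA * C pv)
        = (X - C c) * ((X - C c + 1) * (C q * Pp) - Q * C pv)
          + ((X - C c) * (Q * C pv - C pv * Q) - (Q * C pv - C q * Pp))
          + (Q * C pv - (X - C c + 1) * (C q * Pp))
          + (X - C c) * (C pv * (Q - bA))
          + ((X - C c) * (C pv * bA) - (X - C c) * (bA * C pv)) :=
      gid2 X (C c) Q (C pv) (C q) Pp bA
    have hZF : Znull η ((X - C c) * ((X - C c) * (C q * Pp) - bA * C pv)) := by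
      rw [eF]
      refine Znull_add η (Znull_add η (Znull_add η (Znull_add η ?_ ?_) ?_) ?_) ?_
      · rw [ea]
        exact Znull_mul _ _ (Znull_neg _ hZ1)
      · rw [id1, psub_self]
        exact Znull_zero η
      · exact hZ1
      · exact Znull_mul _ _ (Znull_mul _ _ hZb)
      · rw [com1, psub_self]
        exact Znull_zero η
    have hZG : Znull η ((X - C c) * (C q * Pp) - bA * C pv) := by
      rw [hXz] at hZF
      have h2 := Znull_cancel η (aK (β i)) hZF
      rw [← hXz] at h2
      exact h2
    have hZG2 : Znull η ((X - C c) * (C q * Pp - b2A * C pv)) := by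
      have e2 : (X - C c) * (C q * Pp - b2A * C pv)
          = (X - C c) * (C q * Pp) - bA * C pv := by
        rw [hbAL]
        exact gdistrib (X - C c) (C q * Pp) b2A (C pv)
      rw [e2]
      exact hZG
    have hZW : Znull η (C q * Pp - b2A * C pv) := by
      rw [hXz] at hZG2
      exact Znull_cancel η (aK (β i)) hZG2
    have h0 : (X - C c + 1) * (b2A * C pv) - (Bp.map aK) * C pv = 0 := by
      rw [hbplusA]
      exact pgassoc0 _ _ _
    have eFin : Q * C pv - (Bp.map aK) * C pv
        = (Q * C pv - (X - C c + 1) * (C q * Pp))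
          + (X - C c + 1) * (C q * Pp - b2A * C pv)
          + ((X - C c + 1) * (b2A * C pv) - (Bp.map aK) * C pv) :=
      gfin (Q * C pv) (X - C c + 1) (C q * Pp) (b2A * C pv) ((Bp.map aK) * C pv)
    have hZfin : Znull η (Q * C pv - (Bp.map aK) * C pv) := by
      rw [eFin]
      refine Znull_add η (Znull_add η hZ1 (Znull_mul _ _ hZW)) ?_
      rw [h0]
      exact Znull_zero η
    intro m
    have h := hZfin m
    rw [pcoeff_sub, Polynomial.coeff_mul_C, Polynomial.coeff_mul_C, sub_smul, mul_smul,
      mul_smul, sub_eq_zero, Polynomial.coeff_map] at h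
    exact h
  · -- T₁₂ lowers βᵢ
    have com2 : C rv * bA = bA * C rv := (mapPolyComm b (C rv)).symm
    have eG : (X - C c) * (Q * C rv - (X - C c - 1) * (b2A * C rv))
        = ((X - C c) * (Q * C rv - C rv * Q) - (R * C q - C rv * Q))
          + R * C q
          + (X - C c - 1) * (C rv * (Q - bA))
          + ((X - C c - 1) * (C rv * bA) - (X - C c - 1) * (bA * C rv))
          + ((X - C c - 1) * (bA * C rv) - (X - C c - 1) * ((X - C c) * (b2A * C rv))) :=
      gG X (C c) Q (C rv) R (C q) bA (b2A * C rv)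
    have h5 : (X - C c - 1) * (bA * C rv) - (X - C c - 1) * ((X - C c) * (b2A * C rv)) = 0 := by
      rw [hbAL]
      exact pgma _ _ _ _
    have hZbig : Znull η ((X - C c) * (Q * C rv - (X - C c - 1) * (b2A * C rv))) := by
      rw [eG]
      refine Znull_add η (Znull_add η (Znull_add η (Znull_add η ?_ ?_) ?_) ?_) ?_
      · rw [id3, psub_self]
        exact Znull_zero η
      · exact Znull_mul _ _ hZCq
      · exact Znull_mul _ _ (Znull_mul _ _ hZb)
      · rw [com2, psub_self]
        exact Znull_zero η
      · rw [h5]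
        exact Znull_zero η
    have hZ13 : Znull η (Q * C rv - (X - C c - 1) * (b2A * C rv)) := by
      rw [hXz] at hZbig
      have h2 := Znull_cancel η (aK (β i)) hZbig
      rw [← hXz] at h2
      exact h2
    have h0 : (X - C c - 1) * (b2A * C rv) - (Bm.map aK) * C rv = 0 := by
      rw [hbminusA]
      exact pgassoc0 _ _ _
    have eFin : Q * C rv - (Bm.map aK) * C rv
        = (Q * C rv - (X - C c - 1) * (b2A * C rv))
          + ((X - C c - 1) * (b2A * C rv) - (Bm.map aK) * C rv) := by
      have := gsplit (Q * C rv) ((X - C c - 1) * (b2A * C rv)) ((Bm.map aK) * C rv)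
      exact this
    have hZfin : Znull η (Q * C rv - (Bm.map aK) * C rv) := by
      rw [eFin]
      refine Znull_add η hZ13 ?_
      rw [h0]
      exact Znull_zero η
    intro m
    have h := hZfin m
    rw [pcoeff_sub, Polynomial.coeff_mul_C, Polynomial.coeff_mul_C, sub_smul, mul_smul,
      mul_smul, sub_eq_zero, Polynomial.coeff_map] at h
    exact h
end

section
/- Let V be a Y_p(gl_2)-module on which the quantum determinant acts by D(u)η = γ(u)η for a fixed monic polynomial γ of degree 2p, and let η be a weight vector with T_{22}(u)η = Π_{i=1}^p (u+β_i)η where β_i - β_j ∉ ℤ for i ≠ j. Then T_{12}(-β_i - 1)T_{21}(-β_i)η = -γ(-β_i)η and T_{21}(-β_i + 1)T_{12}(-β_i)η = -γ(-β_i + 1)η, and T_{12}(-β_r)T_{21}(-β_s)η = T_{21}(-β_s)T_{12}(-β_r)η for r ≠ s. -/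
open Polynomial

namespace YpAux

variable (K : Type) [Field K] (p : ℕ)

noncomputable def cY (w : K) : Yp K p := algebraMap K (Yp K p) w

theorem c_comm (w : K) (a : Yp K p) : Commute (cY K p w) a := Algebra.commutes w a

theorem tY_zero (i j : Fin 2) : tY K p i j 0 = if i = j then 1 else 0 := by
  unfold tY tF
  rw [dif_pos rfl]
  split_ifs <;> simp

theorem tY_gt (i j : Fin 2) (r : ℕ) (hr : p < r) : tY K p i j r = 0 := by
  unfold tY tF
  rw [dif_neg (by omega), dif_neg (by omega), map_zero]

theorem comm_general (i j k l : Fin 2) (r s : ℕ) :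
    tY K p i j r * tY K p k l s - tY K p k l s * tY K p i j r =
      ∑ a ∈ Finset.Icc 1 (min r s),
        (tY K p k j (a - 1) * tY K p i l (r + s - a)
          - tY K p k j (r + s - a) * tY K p i l (a - 1)) := by
  rcases Nat.eq_zero_or_pos r with hr0 | hr1
  · subst hr0
    simp only [Nat.zero_min, Finset.Icc_self, tY_zero]
    rw [show Finset.Icc 1 0 = (∅ : Finset ℕ) from rfl]
    split_ifs <;> simp
  rcases Nat.eq_zero_or_pos s with hs0 | hs1
  · subst hs0
    simp only [Nat.min_zero, tY_zero]
    rw [show Finset.Icc 1 0 = (∅ : Finset ℕ) from rfl]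
    split_ifs <;> simp
  rcases le_or_gt r p with hrp | hrp
  · rcases le_or_gt s p with hsp | hsp
    · have h := RingQuot.mkAlgHom_rel (S := K) (A := FreeAlgebra K (YGen p)) (YRel.rel i j k l r s hr1 hrp hs1 hsp)
      simp only [map_sub, map_mul, map_sum] at h
      exact h
    · -- s > p : tY k l s = 0 and r + s - a > p
      have hz : ∀ a ∈ Finset.Icc 1 (min r s),
          tY K p k j (a - 1) * tY K p i l (r + s - a)
            - tY K p k j (r + s - a) * tY K p i l (a - 1) = 0 := by
        intro a ha
        have ha' := Finset.mem_Icc.mp ha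
        have h1 : p < r + s - a := by
          have := Nat.min_le_left r s
          omega
        rw [tY_gt K p k j _ h1, tY_gt K p i l _ h1]
        simp
      rw [Finset.sum_eq_zero hz, tY_gt K p k l s hsp]
      simp
  · have hz : ∀ a ∈ Finset.Icc 1 (min r s),
        tY K p k j (a - 1) * tY K p i l (r + s - a)
          - tY K p k j (r + s - a) * tY K p i l (a - 1) = 0 := by
      intro a ha
      have ha' := Finset.mem_Icc.mp ha
      have h1 : p < r + s - a := by
        have := Nat.min_le_right r s
        omega
      rw [tY_gt K p k j _ h1, tY_gt K p i l _ h1]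
      simp
    rw [Finset.sum_eq_zero hz, tY_gt K p i j r hrp]
    simp


theorem star_rel (i j k l : Fin 2) (r s : ℕ) :
    (tY K p i j (r+1) * tY K p k l s - tY K p k l s * tY K p i j (r+1))
      - (tY K p i j r * tY K p k l (s+1) - tY K p k l (s+1) * tY K p i j r)
    = tY K p k j r * tY K p i l s - tY K p k j s * tY K p i l r := by
  rw [comm_general, comm_general]
  have e1 : ∀ a : ℕ, r + 1 + s - a = r + s + 1 - a := fun a => by omega
  have e2 : ∀ a : ℕ, r + (s + 1) - a = r + s + 1 - a := fun a => by omega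
  simp only [e1, e2]
  rcases lt_trichotomy r s with h | h | h
  · rw [show min (r+1) s = r+1 from by omega, show min r (s+1) = r from by omega,
      Finset.sum_Icc_succ_top (by omega : (1:ℕ) ≤ r + 1), add_sub_cancel_left,
      show r + 1 - 1 = r from by omega, show r + s + 1 - (r+1) = s from by omega]
  · subst h
    rw [show min (r+1) r = r from by omega, show min r (r+1) = r from by omega]
    simp
  · rw [show min (r+1) s = s from by omega, show min r (s+1) = s+1 from by omega,
      Finset.sum_Icc_succ_top (by omega : (1:ℕ) ≤ s + 1), sub_add_cancel_left,
      show s + 1 - 1 = s from by omega, show r + s + 1 - (s+1) = r from by omega, neg_sub]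


noncomputable def Tv (i j : Fin 2) (w : K) : Yp K p :=
  ∑ r ∈ Finset.range (p+1), tY K p i j r * (cY K p w)^(p-r)

theorem pow_swap (w z : K) (a b : ℕ) :
    (cY K p z)^b * (cY K p w)^a = (cY K p w)^a * (cY K p z)^b := by
  simp only [cY, ← map_pow, ← map_mul]
  exact congrArg _ (mul_comm _ _)

theorem key_pow (w z : K) (a b : ℕ) :
    (cY K p w - cY K p z) * ((cY K p w)^a * (cY K p z)^b)
      = (cY K p w)^(a+1) * (cY K p z)^b - (cY K p w)^a * (cY K p z)^(b+1) := by
  simp only [cY, ← map_pow, ← map_mul, ← map_sub]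
  exact congrArg _ (by ring)

theorem Tv_mul (i j k l : Fin 2) (w z : K) :
    Tv K p i j w * Tv K p k l z =
      ∑ r ∈ Finset.range (p+1), ∑ s ∈ Finset.range (p+1),
        (tY K p i j r * tY K p k l s) * ((cY K p w)^(p-r) * (cY K p z)^(p-s)) := by
  rw [Tv, Tv, Finset.sum_mul_sum]
  refine Finset.sum_congr rfl fun r _ => Finset.sum_congr rfl fun s _ => ?_
  exact ((c_comm K p w (tY K p k l s)).pow_left (p-r)).mul_mul_mul_comm _ _

theorem Tv_mul_rev (i j k l : Fin 2) (w z : K) :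
    Tv K p k l z * Tv K p i j w =
      ∑ r ∈ Finset.range (p+1), ∑ s ∈ Finset.range (p+1),
        (tY K p k l s * tY K p i j r) * ((cY K p w)^(p-r) * (cY K p z)^(p-s)) := by
  rw [Tv_mul, Finset.sum_comm]
  exact Finset.sum_congr rfl fun r _ => Finset.sum_congr rfl fun s _ => by
    rw [pow_swap]

theorem sum_shift (f : ℕ → Yp K p) (h0 : f 0 = 0) (htop : f (p+1) = 0) :
    ∑ r ∈ Finset.range (p+1), f (r+1) = ∑ r ∈ Finset.range (p+1), f r := by
  have h := Finset.sum_range_succ' f (p+1)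
  rw [Finset.sum_range_succ f (p+1), h0, htop, add_zero, add_zero] at h
  exact h.symm

theorem com_zero_left (i j k l : Fin 2) (s : ℕ) :
    tY K p i j 0 * tY K p k l s - tY K p k l s * tY K p i j 0 = 0 := by
  rw [tY_zero]; split_ifs <;> simp

theorem com_zero_right (i j k l : Fin 2) (r : ℕ) :
    tY K p i j r * tY K p k l 0 - tY K p k l 0 * tY K p i j r = 0 := by
  rw [tY_zero]; split_ifs <;> simp

theorem master (i j k l : Fin 2) (w z : K) :
    (cY K p w - cY K p z) * (Tv K p i j w * Tv K p k l z - Tv K p k l z * Tv K p i j w)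
      = Tv K p k j w * Tv K p i l z - Tv K p k j z * Tv K p i l w := by
  have hcen : ∀ a : Yp K p, Commute (cY K p w - cY K p z) a :=
    fun a => (c_comm K p w a).sub_left (c_comm K p z a)
  -- notation
  set x := cY K p w with hxdef
  set y := cY K p z with hydef
  set Com : ℕ → ℕ → Yp K p := fun r s =>
    tY K p i j r * tY K p k l s - tY K p k l s * tY K p i j r with hCom
  set G : ℕ → ℕ → Yp K p := fun a b => x^(p+1-a) * y^(p+1-b) with hG
  have step1 : Tv K p i j w * Tv K p k l z - Tv K p k l z * Tv K p i j w
      = ∑ r ∈ Finset.range (p+1), ∑ s ∈ Finset.range (p+1),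
          Com r s * (x^(p-r) * y^(p-s)) := by
    rw [Tv_mul, Tv_mul_rev, ← Finset.sum_sub_distrib]
    refine Finset.sum_congr rfl fun r _ => ?_
    rw [← Finset.sum_sub_distrib]
    refine Finset.sum_congr rfl fun s _ => ?_
    rw [hCom, sub_mul]
  have step2 : (x - y) * (∑ r ∈ Finset.range (p+1), ∑ s ∈ Finset.range (p+1),
          Com r s * (x^(p-r) * y^(p-s)))
      = (∑ r ∈ Finset.range (p+1), ∑ s ∈ Finset.range (p+1), Com r s * G r (s+1))
        - ∑ r ∈ Finset.range (p+1), ∑ s ∈ Finset.range (p+1), Com r s * G (r+1) s := by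
    rw [Finset.mul_sum, ← Finset.sum_sub_distrib]
    refine Finset.sum_congr rfl fun r hr => ?_
    rw [Finset.mul_sum, ← Finset.sum_sub_distrib]
    refine Finset.sum_congr rfl fun s hs => ?_
    have hr' : r ≤ p := by have := Finset.mem_range.mp hr; omega
    have hs' : s ≤ p := by have := Finset.mem_range.mp hs; omega
    rw [← mul_assoc, (hcen (Com r s)).eq, mul_assoc, key_pow]
    simp only [hG]
    rw [show p+1-r = (p-r)+1 from by omega, show p+1-(s+1) = p-s from by omega,
      show p+1-(r+1) = p-r from by omega, show p+1-s = (p-s)+1 from by omega]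
    rw [mul_sub]
  have shift1 : ∑ r ∈ Finset.range (p+1), ∑ s ∈ Finset.range (p+1),
        Com (r+1) s * G (r+1) (s+1)
      = ∑ r ∈ Finset.range (p+1), ∑ s ∈ Finset.range (p+1), Com r s * G r (s+1) := by
    refine sum_shift K p (fun r => ∑ s ∈ Finset.range (p+1), Com r s * G r (s+1)) ?_ ?_
    · exact Finset.sum_eq_zero fun s _ => by rw [hCom]; simp [com_zero_left]
    · exact Finset.sum_eq_zero fun s _ => by
        rw [hCom]; simp [tY_gt K p i j (p+1) (by omega)]
  have shift2 : ∀ r, ∑ s ∈ Finset.range (p+1), Com r (s+1) * G (r+1) (s+1)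
      = ∑ s ∈ Finset.range (p+1), Com r s * G (r+1) s := by
    intro r
    refine sum_shift K p (fun s => Com r s * G (r+1) s) ?_ ?_
    · rw [hCom]; simp [com_zero_right]
    · rw [hCom]; simp [tY_gt K p k l (p+1) (by omega)]
  rw [step1, step2, ← shift1]
  have shift2' : ∑ r ∈ Finset.range (p+1), ∑ s ∈ Finset.range (p+1), Com r s * G (r+1) s
      = ∑ r ∈ Finset.range (p+1), ∑ s ∈ Finset.range (p+1), Com r (s+1) * G (r+1) (s+1) :=
    (Finset.sum_congr rfl fun r _ => (shift2 r).symm)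
  rw [shift2']
  rw [← Finset.sum_sub_distrib]
  have main : ∀ r s : ℕ, Com (r+1) s * G (r+1) (s+1) - Com r (s+1) * G (r+1) (s+1)
      = (tY K p k j r * tY K p i l s) * (x^(p-r) * y^(p-s))
        - (tY K p k j s * tY K p i l r) * (x^(p-r) * y^(p-s)) := by
    intro r s
    simp only [hCom, hG]
    rw [← sub_mul, star_rel, sub_mul,
      show p+1-(r+1) = p-r from by omega, show p+1-(s+1) = p-s from by omega]
  have expand : ∀ r, ∑ s ∈ Finset.range (p+1),
        (Com (r+1) s * G (r+1) (s+1) - Com r (s+1) * G (r+1) (s+1))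
      = ∑ s ∈ Finset.range (p+1),
        ((tY K p k j r * tY K p i l s) * (x^(p-r) * y^(p-s))
          - (tY K p k j s * tY K p i l r) * (x^(p-r) * y^(p-s))) :=
    fun r => Finset.sum_congr rfl fun s _ => main r s
  calc ∑ r ∈ Finset.range (p+1), (∑ s ∈ Finset.range (p+1), Com (r+1) s * G (r+1) (s+1)
          - ∑ s ∈ Finset.range (p+1), Com r (s+1) * G (r+1) (s+1))
      = ∑ r ∈ Finset.range (p+1), ∑ s ∈ Finset.range (p+1),
          ((tY K p k j r * tY K p i l s) * (x^(p-r) * y^(p-s))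
            - (tY K p k j s * tY K p i l r) * (x^(p-r) * y^(p-s))) := by
        refine Finset.sum_congr rfl fun r _ => ?_
        rw [← Finset.sum_sub_distrib, expand r]
    _ = Tv K p k j w * Tv K p i l z - Tv K p k j z * Tv K p i l w := by
        rw [Tv_mul, Tv_mul_rev, ← Finset.sum_sub_distrib]
        refine Finset.sum_congr rfl fun r _ => ?_
        rw [← Finset.sum_sub_distrib]


noncomputable def Ev (i j : Fin 2) (w : K) : Yp K p := (TY K p i j).eval (cY K p w)

theorem evalc_mul (P Q : Polynomial (Yp K p)) (x : Yp K p) (hx : ∀ a : Yp K p, Commute a x) :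
    (P * Q).eval x = P.eval x * Q.eval x :=
  Polynomial.eval₂_mul_noncomm _ _ (fun k => hx _)

theorem evalc_pow (P : Polynomial (Yp K p)) (x : Yp K p) (hx : ∀ a : Yp K p, Commute a x)
    (n : ℕ) : (P^n).eval x = (P.eval x)^n := by
  induction n with
  | zero => simp
  | succ n ih => rw [pow_succ, evalc_mul K p _ _ _ hx, ih, pow_succ]

theorem eval_comp_c (Q : Polynomial (Yp K p)) (w : K) :
    (Q.comp (X - 1)).eval (cY K p w) = Q.eval (cY K p w - 1) := by
  have hx : ∀ a : Yp K p, Commute a (cY K p w) := fun a => (c_comm K p w a).symm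
  rw [Polynomial.comp_eq_sum_left, Polynomial.sum_def, Polynomial.eval_finset_sum,
    Polynomial.eval_eq_sum, Polynomial.sum_def]
  refine Finset.sum_congr rfl fun n _ => ?_
  rw [evalc_mul K p _ _ _ hx, Polynomial.eval_C, evalc_pow K p _ _ hx,
    Polynomial.eval_sub, Polynomial.eval_X, Polynomial.eval_one]

theorem TY_eval (i j : Fin 2) (w : K) : Ev K p i j w = Tv K p i j w := by
  have ha : ((if i = j then (X : Polynomial (Yp K p))^p else 0)).eval (cY K p w)
      = tY K p i j 0 * (cY K p w)^(p-0) := by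
    rw [tY_zero]
    split_ifs
    · rw [Nat.sub_zero, one_mul,
        show ((X : Polynomial (Yp K p))^p) = monomial p (1 : Yp K p) from by
          rw [← C_mul_X_pow_eq_monomial, C_1, one_mul],
        Polynomial.eval_monomial, one_mul]
    · simp
  have hb : (∑ k ∈ Finset.Icc 1 p, C (tY K p i j k) * X^(p-k)).eval (cY K p w)
      = ∑ r ∈ Finset.range p, tY K p i j (r+1) * (cY K p w)^(p-(r+1)) := by
    rw [Polynomial.eval_finset_sum]
    rw [show Finset.Icc 1 p = Finset.Ico 1 (p+1) from (Finset.Ico_add_one_right_eq_Icc 1 p).symm,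
      Finset.sum_Ico_eq_sum_range]
    simp only [Nat.add_sub_cancel]
    refine Finset.sum_congr rfl fun r _ => ?_
    rw [show (1:ℕ) + r = r + 1 from by omega, C_mul_X_pow_eq_monomial, Polynomial.eval_monomial]
  rw [Ev, TY, Polynomial.eval_add, ha, hb, Tv,
    Finset.sum_range_succ' (fun r => tY K p i j r * (cY K p w)^(p-r)) p]
  exact add_comm _ _

theorem Ev_master (i j k l : Fin 2) (w z : K) :
    cY K p (w - z) * (Ev K p i j w * Ev K p k l z - Ev K p k l z * Ev K p i j w)
      = Ev K p k j w * Ev K p i l z - Ev K p k j z * Ev K p i l w := by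
  simp only [TY_eval]
  rw [show cY K p (w - z) = cY K p w - cY K p z from map_sub _ _ _]
  exact master K p i j k l w z

theorem DY_eval (w : K) : (DY K p).eval (cY K p w)
    = Ev K p 0 0 w * Ev K p 1 1 (w-1) - Ev K p 1 0 w * Ev K p 0 1 (w-1) := by
  have hx : ∀ a : Yp K p, Commute a (cY K p w) := fun a => (c_comm K p w a).symm
  have h1 : cY K p w - 1 = cY K p (w-1) := by rw [cY, cY, map_sub, map_one]
  rw [DY, Polynomial.eval_sub, evalc_mul K p _ _ _ hx, evalc_mul K p _ _ _ hx,
    eval_comp_c, eval_comp_c, h1]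
  rfl


theorem DY_eval2 (w : K) : (DY K p).eval (cY K p w)
    = Ev K p 0 0 (w-1) * Ev K p 1 1 w - Ev K p 0 1 (w-1) * Ev K p 1 0 w := by
  have rd := Ev_master K p 1 0 0 1 w (w-1)
  rw [show w - (w-1) = 1 from by ring, show cY K p 1 = 1 from map_one _, one_mul] at rd
  rw [DY_eval]
  have h2 : Ev K p 0 0 w * Ev K p 1 1 (w-1)
      = Ev K p 1 0 w * Ev K p 0 1 (w-1) - Ev K p 0 1 (w-1) * Ev K p 1 0 w
        + Ev K p 0 0 (w-1) * Ev K p 1 1 w := by rw [rd]; abel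
  rw [h2]; abel

theorem cY_neg (t : K) : cY K p (-t) = -cY K p t := map_neg _ _

section ModuleSec
variable (V : Type) [AddCommGroup V] [Module (Yp K p) V]

theorem smul_c (s : K) (a : Yp K p) (v : V) : a • (cY K p s • v) = cY K p s • (a • v) := by
  rw [← mul_smul, ← mul_smul, ← (c_comm K p s a).eq]

theorem c_c_smul (s t : K) (v : V) : cY K p s • cY K p t • v = cY K p (s*t) • v := by
  rw [← mul_smul, cY, cY, cY, ← map_mul]

theorem c_smul_cancel (s : K) (hs : s ≠ 0) (v : V) (h : cY K p s • v = 0) : v = 0 := by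
  have h2 : cY K p s⁻¹ • cY K p s • v = 0 := by rw [h, smul_zero]
  rw [c_c_smul, inv_mul_cancel₀ hs] at h2
  have h3 : cY K p 1 = (1 : Yp K p) := map_one _
  rw [h3, one_smul] at h2
  exact h2

theorem eval_smul_of_coeff (P : Polynomial (Yp K p)) (Q : Polynomial K) (v : V)
    (h : ∀ m, P.coeff m • v = cY K p (Q.coeff m) • v) (w : K) :
    P.eval (cY K p w) • v = cY K p (Q.eval w) • v := by
  set N := max P.natDegree Q.natDegree + 1 with hN
  have hP : P.natDegree < N := by omega
  have hQ : Q.natDegree < N := by omega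
  rw [Polynomial.eval_eq_sum_range' hP, Polynomial.eval_eq_sum_range' hQ, Finset.sum_smul]
  have hterm : ∀ m ∈ Finset.range N,
      (P.coeff m * (cY K p w)^m) • v = cY K p (Q.coeff m * w^m) • v := by
    intro m _
    have hpow : (cY K p w)^m = cY K p (w^m) := by rw [cY, cY, map_pow]
    rw [mul_smul, hpow, smul_c, h m, c_c_smul, mul_comm]
  rw [Finset.sum_congr rfl hterm, ← Finset.sum_smul]
  congr 1
  simp only [cY]
  rw [← map_sum]

end ModuleSec

end YpAux

open YpAux

/-- Let `V` be a `Y_p(gl_2)`-module on which the quantum determinant acts by the monic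
degree-`2p` polynomial `γ`, and let `η` be a weight vector of generic weight `β`.  Then
`T_12(-β_i - 1) T_21(-β_i) η = -γ(-β_i) η`,
`T_21(-β_i + 1) T_12(-β_i) η = -γ(-β_i + 1) η`, and
`T_12(-β_r)` and `T_21(-β_s)` commute on `η` for `r ≠ s`. -/
theorem quantum_det_action_on_weight_vector (K : Type) [Field K] (p : ℕ) (V : Type)
    [AddCommGroup V] [Module (Yp K p) V]
    (γ : Polynomial K) (hmonic : γ.Monic) (hdeg : γ.natDegree = 2 * p)
    (hγ : ∀ (m : ℕ) (η : V), ((DY K p).coeff m) • η = (algebraMap K (Yp K p) (γ.coeff m)) • η)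
    (β : Fin p → K) (hβ : ∀ i j, i ≠ j → ∀ m : ℤ, β i - β j ≠ (m : K))
    (η : V) (hη : η ∈ wtSet K p V β) :
    (∀ i : Fin p,
      ((TY K p 0 1).eval (algebraMap K (Yp K p) (-β i - 1))) •
          (((TY K p 1 0).eval (algebraMap K (Yp K p) (-β i))) • η) =
        (algebraMap K (Yp K p) (-γ.eval (-β i))) • η) ∧
    (∀ i : Fin p,
      ((TY K p 1 0).eval (algebraMap K (Yp K p) (-β i + 1))) •
          (((TY K p 0 1).eval (algebraMap K (Yp K p) (-β i))) • η) =
        (algebraMap K (Yp K p) (-γ.eval (-β i + 1))) • η) ∧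
    (∀ r s : Fin p, r ≠ s →
      ((TY K p 0 1).eval (algebraMap K (Yp K p) (-β r))) •
          (((TY K p 1 0).eval (algebraMap K (Yp K p) (-β s))) • η) =
        ((TY K p 1 0).eval (algebraMap K (Yp K p) (-β s))) •
          (((TY K p 0 1).eval (algebraMap K (Yp K p) (-β r))) • η)) := by
  have hwt : ∀ w : K, Ev K p 1 1 w • η
      = cY K p ((∏ i, (X + C (β i)) : Polynomial K).eval w) • η :=
    fun w => eval_smul_of_coeff K p V _ _ η (fun m => hη m) w
  have hroot : ∀ i : Fin p, ((∏ i, (X + C (β i)) : Polynomial K)).eval (-β i) = 0 := by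
    intro i
    rw [Polynomial.eval_prod]
    exact Finset.prod_eq_zero (Finset.mem_univ i) (by simp)
  have hwt0 : ∀ i : Fin p, Ev K p 1 1 (-β i) • η = 0 := by
    intro i
    rw [hwt, hroot i, show cY K p 0 = 0 from map_zero _, zero_smul]
  have hD : ∀ w : K, (DY K p).eval (cY K p w) • η = cY K p (γ.eval w) • η :=
    fun w => eval_smul_of_coeff K p V _ _ η (fun m => hγ m η) w
  have msmul : ∀ (i j k l : Fin 2) (w z : K) (v : V),
      cY K p (w - z) • (Ev K p i j w • (Ev K p k l z • v)
        - Ev K p k l z • (Ev K p i j w • v))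
      = Ev K p k j w • (Ev K p i l z • v) - Ev K p k j z • (Ev K p i l w • v) := by
    intro i j k l w z v
    have h := congrArg (fun q : Yp K p => q • v) (Ev_master K p i j k l w z)
    simpa only [mul_smul, sub_smul] using h
  refine ⟨?_, ?_, ?_⟩
  · -- claim 1
    intro i
    have key := hD (-β i)
    rw [DY_eval2, sub_smul, mul_smul, mul_smul, hwt0 i, smul_zero, zero_sub] at key
    show Ev K p 0 1 (-β i - 1) • (Ev K p 1 0 (-β i) • η) = cY K p (-γ.eval (-β i)) • η
    rw [cY_neg, neg_smul, ← key, neg_neg]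
  · -- claim 2
    intro i
    have key := hD (-β i + 1)
    rw [DY_eval, show -β i + 1 - 1 = -β i from by ring, sub_smul, mul_smul, mul_smul,
      hwt0 i, smul_zero, zero_sub] at key
    show Ev K p 1 0 (-β i + 1) • (Ev K p 0 1 (-β i) • η) = cY K p (-γ.eval (-β i + 1)) • η
    rw [cY_neg, neg_smul, ← key, neg_neg]
  · -- claim 3
    intro r s hrs
    have h0 := hβ s r (Ne.symm hrs) 0
    rw [Int.cast_zero, sub_ne_zero] at h0
    have hab : (-β r) - (-β s) ≠ 0 := fun h => h0 ((neg_injective (sub_eq_zero.mp h)).symm)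
    have S1 := msmul 0 0 1 1 (-β r) (-β s) η
    rw [hwt0 s, smul_zero, zero_sub, smul_neg, neg_eq_iff_eq_neg, neg_sub] at S1
    have S2 := msmul 0 0 1 1 (-β s) (-β r) η
    rw [hwt0 r, smul_zero, zero_sub, smul_neg, neg_eq_iff_eq_neg, neg_sub] at S2
    have S2' : cY K p (-β r - -β s) • (Ev K p 1 1 (-β r) • (Ev K p 0 0 (-β s) • η))
        = Ev K p 1 0 (-β s) • (Ev K p 0 1 (-β r) • η)
          - Ev K p 1 0 (-β r) • (Ev K p 0 1 (-β s) • η) := by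
      rw [show (-β r - -β s : K) = -(-β s - -β r) from by ring, cY_neg, neg_smul, S2, neg_sub]
    have S3 := msmul 0 1 1 0 (-β r) (-β s) η
    have key : cY K p (((-β r) - (-β s)) * ((-β r) - (-β s))) •
        (Ev K p 0 1 (-β r) • (Ev K p 1 0 (-β s) • η)
          - Ev K p 1 0 (-β s) • (Ev K p 0 1 (-β r) • η)) = 0 := by
      rw [← c_c_smul, S3, smul_sub, S2', S1, sub_self]
    have hz := c_smul_cancel K p V _ (mul_ne_zero hab hab) _ key
    exact sub_eq_zero.mp hz
end
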